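/- arXiv:2301.01428 — 2 statements merged into one kernel-verified Lean document; each statement's English description precedes it below -/
import Mathlib

section
/- For fixed real numbers x > y, the function l ↦ l·Ψ(lx, ly) = (e^{l(y-x)} - l(y-x) - 1)/(l(y-x)^2) is monotonically increasing on (0,∞) and converges to 1/(x-y) as l → ∞. -/
lemma key_ineq (t : ℝ) (ht : t < 0) : 0 < (t - 1) * Real.exp t + 1 := by
  have h := Real.add_one_lt_exp (by linarith : -t ≠ 0)
  have h1 : Real.exp t * Real.exp (-t) = 1 := by
    rw [← Real.exp_add]; simp
  nlinarith [Real.exp_pos t]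

lemma deriv_aux (c : ℝ) (hc : c < 0) (l : ℝ) (hl : 0 < l) :
    HasDerivAt (fun l : ℝ => (Real.exp (l * c) - l * c - 1) / (l * c ^ 2))
      (((Real.exp (l * c) * c - c) * (l * c ^ 2) - (Real.exp (l * c) - l * c - 1) * c ^ 2)
        / (l * c ^ 2) ^ 2) l := by
  have hc0 : c ≠ 0 := ne_of_lt hc
  have hlc : l * c ^ 2 ≠ 0 := by positivity
  have h1 : HasDerivAt (fun l : ℝ => l * c) c l := by
    simpa using (hasDerivAt_id l).mul_const c
  have hexp : HasDerivAt (fun l : ℝ => Real.exp (l * c)) (Real.exp (l * c) * c) l := h1.exp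
  have hnum : HasDerivAt (fun l : ℝ => Real.exp (l * c) - l * c - 1)
      (Real.exp (l * c) * c - c) l := (hexp.sub h1).sub_const 1
  have hden : HasDerivAt (fun l : ℝ => l * c ^ 2) (c ^ 2) l := by
    simpa using (hasDerivAt_id l).mul_const (c ^ 2)
  exact hnum.div hden hlc

theorem stmt1 (x y : ℝ) (hxy : y < x) :
    MonotoneOn (fun l : ℝ => (Real.exp (l * (y - x)) - l * (y - x) - 1) / (l * (y - x) ^ 2))
      (Set.Ioi 0) ∧
    Filter.Tendsto (fun l : ℝ => (Real.exp (l * (y - x)) - l * (y - x) - 1) / (l * (y - x) ^ 2))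
      Filter.atTop (nhds (1 / (x - y))) := by
  set c := y - x with hcdef
  have hc : c < 0 := by simp [hcdef]; linarith
  have hc0 : c ≠ 0 := ne_of_lt hc
  constructor
  · apply StrictMonoOn.monotoneOn
    apply strictMonoOn_of_deriv_pos (convex_Ioi 0)
    · intro l hl
      exact (deriv_aux c hc l hl).continuousAt.continuousWithinAt
    · intro l hl
      rw [interior_Ioi] at hl
      have hl' : (0:ℝ) < l := hl
      rw [(deriv_aux c hc l hl').deriv]
      have hnum : ((Real.exp (l * c) * c - c) * (l * c ^ 2) - (Real.exp (l * c) - l * c - 1) * c ^ 2)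
          = c ^ 2 * ((l * c - 1) * Real.exp (l * c) + 1) := by ring
      rw [hnum]
      have hkey := key_ineq (l * c) (by nlinarith)
      have hden : (0:ℝ) < (l * c ^ 2) ^ 2 := by positivity
      positivity
  · have heq : ∀ᶠ l : ℝ in Filter.atTop,
        Real.exp (l * c) * (c ^ 2 * l)⁻¹ - 1 / c - (c ^ 2 * l)⁻¹
          = (Real.exp (l * c) - l * c - 1) / (l * c ^ 2) := by
      filter_upwards [Filter.eventually_gt_atTop 0] with l hl
      field_simp
    have hlim1 : Filter.Tendsto (fun l : ℝ => Real.exp (l * c)) Filter.atTop (nhds 0) := by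
      apply Real.tendsto_exp_atBot.comp
      exact Filter.Tendsto.atTop_mul_const_of_neg hc Filter.tendsto_id
    have hlim2 : Filter.Tendsto (fun l : ℝ => (c ^ 2 * l)⁻¹) Filter.atTop (nhds 0) := by
      apply tendsto_inv_atTop_zero.comp
      exact Filter.Tendsto.const_mul_atTop (by positivity) Filter.tendsto_id
    have hfinal : Filter.Tendsto
        (fun l : ℝ => Real.exp (l * c) * (c ^ 2 * l)⁻¹ - 1 / c - (c ^ 2 * l)⁻¹)
        Filter.atTop (nhds (0 * 0 - 1 / c - 0)) :=
      ((hlim1.mul hlim2).sub tendsto_const_nhds).sub hlim2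
    have h1c : (0:ℝ) * 0 - 1 / c - 0 = 1 / (x - y) := by
      rw [hcdef]
      rw [eq_div_iff (by linarith : x - y ≠ 0)]
      field_simp
      rw [zero_pow two_ne_zero, zero_sub, sub_zero, ← neg_sub x y, one_div_neg_eq_neg_one_div, neg_neg,
        one_div_mul_cancel (by linarith : x - y ≠ 0)]
    rw [← h1c]
    exact Filter.Tendsto.congr' heq hfinal
end

section
/- Let h be a positive-definite Hermitian r×r matrix with eigenvalues λ₁,…,λ_r > 0, and let s = log h (so the eigenvalues of s are log λᵢ). Then log((tr h + tr h⁻¹)/(2r)) ≤ ‖s‖_F ≤ r^{1/2} · log(tr h + tr h⁻¹), where ‖s‖_F = (Σᵢ (log λᵢ)²)^{1/2} is the Frobenius norm of s. -/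
theorem stmt5 (r : ℕ) (hr : 0 < r) (lam : Fin r → ℝ) (hlam : ∀ i, 0 < lam i) :
    Real.log ((∑ i, lam i + ∑ i, (lam i)⁻¹) / (2 * r)) ≤
        Real.sqrt (∑ i, Real.log (lam i) ^ 2) ∧
      Real.sqrt (∑ i, Real.log (lam i) ^ 2) ≤
        Real.sqrt r * Real.log (∑ i, lam i + ∑ i, (lam i)⁻¹) := by
  set S := ∑ i, lam i + ∑ i, (lam i)⁻¹ with hSdef
  set Q := ∑ i, Real.log (lam i) ^ 2 with hQdef
  clear_value S Q
  have hQ0 : 0 ≤ Q := by rw [hQdef]; exact Finset.sum_nonneg fun i _ => sq_nonneg _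
  have hrpos : (0:ℝ) < r := by exact_mod_cast hr
  have hSsum : S = ∑ i, (lam i + (lam i)⁻¹) := by
    rw [hSdef, Finset.sum_add_distrib]
  have hterm2 : ∀ i : Fin r, (2:ℝ) ≤ lam i + (lam i)⁻¹ := by
    intro i
    have h := hlam i
    have h3 : lam i * (lam i)⁻¹ = 1 := mul_inv_cancel₀ (ne_of_gt h)
    nlinarith [sq_nonneg (lam i - 1), h, h3]
  have hS2r : 2 * (r:ℝ) ≤ S := by
    rw [hSsum]
    calc 2 * (r:ℝ) = ∑ _i : Fin r, (2:ℝ) := by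
          simp [Finset.sum_const, mul_comm]
      _ ≤ _ := Finset.sum_le_sum fun i _ => hterm2 i
  have hSpos : 0 < S := lt_of_lt_of_le (by positivity) hS2r
  have hr1 : (1:ℝ) ≤ r := by exact_mod_cast hr
  have hS1 : 1 ≤ S := le_trans (by linarith) hS2r
  have hlogS0 : 0 ≤ Real.log S := Real.log_nonneg hS1
  have hlam_le : ∀ i : Fin r, lam i ≤ S := by
    intro i
    have h1 : lam i ≤ ∑ j, lam j :=
      Finset.single_le_sum (fun j _ => (hlam j).le) (Finset.mem_univ i)
    have h2 : (0:ℝ) ≤ ∑ j, (lam j)⁻¹ :=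
      Finset.sum_nonneg fun j _ => (inv_pos.mpr (hlam j)).le
    linarith
  have hlaminv_le : ∀ i : Fin r, (lam i)⁻¹ ≤ S := by
    intro i
    have h1 : (lam i)⁻¹ ≤ ∑ j, (lam j)⁻¹ :=
      Finset.single_le_sum (fun j _ => (inv_pos.mpr (hlam j)).le) (Finset.mem_univ i)
    have h2 : (0:ℝ) ≤ ∑ j, lam j :=
      Finset.sum_nonneg fun j _ => (hlam j).le
    linarith
  have habslog : ∀ i : Fin r, |Real.log (lam i)| ≤ Real.log S := by
    intro i
    rw [abs_le]
    constructor
    · have := Real.log_le_log (inv_pos.mpr (hlam i)) (hlaminv_le i)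
      rw [Real.log_inv] at this; linarith
    · exact Real.log_le_log (hlam i) (hlam_le i)
  constructor
  · -- first inequality
    have hbound : ∀ i : Fin r, lam i + (lam i)⁻¹ ≤ 2 * Real.exp (Real.sqrt Q) := by
      intro i
      have hti : |Real.log (lam i)| ≤ Real.sqrt Q := by
        have h1 : Real.log (lam i) ^ 2 ≤ Q := by
          rw [hQdef]
          exact Finset.single_le_sum (f := fun j => Real.log (lam j) ^ 2)
            (fun j _ => sq_nonneg _) (Finset.mem_univ i)
        calc |Real.log (lam i)| = Real.sqrt (Real.log (lam i) ^ 2) :=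
              (Real.sqrt_sq_eq_abs _).symm
          _ ≤ Real.sqrt Q := Real.sqrt_le_sqrt h1
      rw [abs_le] at hti
      have e1 : lam i = Real.exp (Real.log (lam i)) := (Real.exp_log (hlam i)).symm
      have e2 : (lam i)⁻¹ = Real.exp (-Real.log (lam i)) := by
        rw [← Real.log_inv, Real.exp_log (inv_pos.mpr (hlam i))]
      have a1 : lam i ≤ Real.exp (Real.sqrt Q) := by
        rw [e1]; exact Real.exp_le_exp.mpr hti.2
      have a2 : (lam i)⁻¹ ≤ Real.exp (Real.sqrt Q) := by
        rw [e2]; exact Real.exp_le_exp.mpr (by linarith [hti.1])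
      linarith
    have hSle : S ≤ 2 * r * Real.exp (Real.sqrt Q) := by
      rw [hSsum]
      calc ∑ i, (lam i + (lam i)⁻¹) ≤ ∑ _i : Fin r, 2 * Real.exp (Real.sqrt Q) :=
            Finset.sum_le_sum fun i _ => hbound i
        _ = 2 * r * Real.exp (Real.sqrt Q) := by
            simp [Finset.sum_const]; ring
    have hdiv : S / (2 * r) ≤ Real.exp (Real.sqrt Q) := by
      rw [div_le_iff₀ (by positivity)]
      linarith [hSle]
    calc Real.log (S / (2 * r)) ≤ Real.log (Real.exp (Real.sqrt Q)) :=
          Real.log_le_log (by positivity) hdiv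
      _ = Real.sqrt Q := Real.log_exp _
  · -- second inequality
    have hQle : Q ≤ r * Real.log S ^ 2 := by
      rw [hQdef]
      calc ∑ i, Real.log (lam i) ^ 2 ≤ ∑ _i : Fin r, Real.log S ^ 2 := by
            apply Finset.sum_le_sum
            intro i _
            have := habslog i
            calc Real.log (lam i) ^ 2 = |Real.log (lam i)| ^ 2 := (sq_abs _).symm
              _ ≤ Real.log S ^ 2 := by nlinarith [abs_nonneg (Real.log (lam i))]
        _ = r * Real.log S ^ 2 := by simp [Finset.sum_const]
    calc Real.sqrt Q ≤ Real.sqrt (r * Real.log S ^ 2) := Real.sqrt_le_sqrt hQle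
      _ = Real.sqrt r * Real.log S := by
          rw [Real.sqrt_mul (by positivity), Real.sqrt_sq hlogS0]
end
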